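/- Let n ≥ 1 and let A* ∈ ℝ^{n×n} be a nonzero symmetric matrix with zero diagonal. If q : ℝⁿ × ℝ → ℝ is a polynomial of total degree at most 2 in the n+1 variables (x₁,…,x_n,z) such that q(x, xᵀA*x) = 0 for every x ∈ ℝⁿ, then there exists a constant C ∈ ℝ such that q(x, z) = C·(z − xᵀA*x) for all (x, z) ∈ ℝⁿ × ℝ. -/

import Mathlib

/-- The general polynomial of total degree at most 2 in the `n+1` variables `(x, z)`:
`q(x,z) = xᵀBx + b₁·x + c₁ + z·(b₂·x) + c₂z² + c₃z`. -/
noncomputable def deg2Poly {n : ℕ} (B : Matrix (Fin n) (Fin n) ℝ)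
    (b₁ b₂ : Fin n → ℝ) (c₁ c₂ c₃ : ℝ) (x : Fin n → ℝ) (z : ℝ) : ℝ :=
  (∑ i, ∑ j, B i j * x i * x j) + (∑ i, b₁ i * x i) + c₁ +
    z * (∑ i, b₂ i * x i) + c₂ * z ^ 2 + c₃ * z

/-! Replacing `x` by `t • x` turns `q(x, xᵀA*x) = 0` into a quartic identity in `t`, so each of
its coefficients vanishes: `c₁ = 0`, `b₁ ⬝ᵥ x = 0`, `xᵀBx + c₃ xᵀA*x = 0`,
`(xᵀA*x)(b₂ ⬝ᵥ x) = 0` and `c₂ (xᵀA*x)² = 0`. By polarization a nonzero symmetric `A*` has a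
point `x₀` with `x₀ᵀA*x₀ ≠ 0`; this kills `c₂`, and on the lines through `x₀` it kills `b₂`.
What remains is `q(x, z) = c₃ (z - xᵀA*x)`. -/

open Matrix

section QuadraticForm

variable {ι R : Type*} [Fintype ι] [CommRing R]

theorem sum_sum_mul_mul_eq_dotProduct_mulVec (M : Matrix ι ι R) (x : ι → R) :
    ∑ i, ∑ j, M i j * x i * x j = x ⬝ᵥ (M *ᵥ x) := by
  simp only [dotProduct, mulVec, Finset.mul_sum]
  exact Finset.sum_congr rfl fun i _ => Finset.sum_congr rfl fun j _ => by ring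

theorem dotProduct_mulVec_smul (M : Matrix ι ι R) (x : ι → R) (t : R) :
    (t • x) ⬝ᵥ (M *ᵥ (t • x)) = t ^ 2 * x ⬝ᵥ (M *ᵥ x) := by
  simp only [mulVec_smul, smul_dotProduct, dotProduct_smul, smul_eq_mul]
  ring

theorem dotProduct_mulVec_add_smul (M : Matrix ι ι R) (u v : ι → R) (t : R) :
    (u + t • v) ⬝ᵥ (M *ᵥ (u + t • v)) =
      u ⬝ᵥ (M *ᵥ u) + t * (u ⬝ᵥ (M *ᵥ v) + v ⬝ᵥ (M *ᵥ u)) + t ^ 2 * v ⬝ᵥ (M *ᵥ v) := by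
  simp only [mulVec_add, mulVec_smul, add_dotProduct, dotProduct_add, smul_dotProduct,
    dotProduct_smul, smul_eq_mul]
  ring

theorem exists_dotProduct_mulVec_ne_zero [NoZeroDivisors R] [CharZero R] {A : Matrix ι ι R}
    (hA : A.IsSymm) (hne : A ≠ 0) : ∃ x, x ⬝ᵥ (A *ᵥ x) ≠ 0 := by
  classical
  obtain ⟨i, j, hij⟩ : ∃ i j, A i j ≠ 0 := by
    by_contra! h
    exact hne (Matrix.ext h)
  by_contra! hzero
  have hdiag (k : ι) : A k k = 0 := by
    simpa [mulVec_single_one] using hzero (Pi.single k 1)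
  have hpolar := hzero (Pi.single i 1 + Pi.single j 1)
  simp only [mulVec_add, add_dotProduct, dotProduct_add, mulVec_single_one, single_one_dotProduct,
    col_apply, hdiag, hA.apply i j, zero_add, add_zero, ← two_mul] at hpolar
  exact hij ((mul_eq_zero.mp hpolar).resolve_left two_ne_zero)

end QuadraticForm

section OrderedField

variable {K : Type*} [Field K] [LinearOrder K] [IsStrictOrderedRing K]

theorem coeffs_eq_zero_of_forall_quartic_eq_zero {a b c d e : K}
    (h : ∀ t : K, a + b * t + c * t ^ 2 + d * t ^ 3 + e * t ^ 4 = 0) :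
    a = 0 ∧ b = 0 ∧ c = 0 ∧ d = 0 ∧ e = 0 := by
  have h₀ := h 0
  have h₁ := h 1
  have h₂ := h (-1)
  have h₃ := h 2
  have h₄ := h (-2)
  norm_num at h₀ h₁ h₂ h₃ h₄
  refine ⟨h₀, ?_, ?_, ?_, ?_⟩ <;> linarith

theorem dotProduct_eq_zero_of_forall_dotProduct_mulVec_mul_eq_zero {ι : Type*} [Fintype ι]
    {A : Matrix ι ι K} {b x₀ : ι → K} (h : ∀ y, y ⬝ᵥ (A *ᵥ y) * (b ⬝ᵥ y) = 0)
    (hx₀ : x₀ ⬝ᵥ (A *ᵥ x₀) ≠ 0) (x : ι → K) : b ⬝ᵥ x = 0 := by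
  have hbx₀ : b ⬝ᵥ x₀ = 0 := (mul_eq_zero.mp (h x₀)).resolve_left hx₀
  -- on the line `x₀ + t • x` the product is a cubic in `t` with linear coefficient
  -- `(x₀ ⬝ᵥ A *ᵥ x₀) * (b ⬝ᵥ x)`
  have hline := coeffs_eq_zero_of_forall_quartic_eq_zero (a := 0) (e := 0)
    (b := x₀ ⬝ᵥ (A *ᵥ x₀) * (b ⬝ᵥ x))
    (c := (x₀ ⬝ᵥ (A *ᵥ x) + x ⬝ᵥ (A *ᵥ x₀)) * (b ⬝ᵥ x))
    (d := x ⬝ᵥ (A *ᵥ x) * (b ⬝ᵥ x)) fun t => by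
      have := h (x₀ + t • x)
      rw [dotProduct_mulVec_add_smul, dotProduct_add, dotProduct_smul, hbx₀, smul_eq_mul] at this
      linear_combination this
  exact (mul_eq_zero.mp hline.2.1).resolve_left hx₀

end OrderedField

theorem deg2Poly_eq {n : ℕ} (B : Matrix (Fin n) (Fin n) ℝ) (b₁ b₂ : Fin n → ℝ)
    (c₁ c₂ c₃ : ℝ) (x : Fin n → ℝ) (z : ℝ) :
    deg2Poly B b₁ b₂ c₁ c₂ c₃ x z =
      x ⬝ᵥ (B *ᵥ x) + b₁ ⬝ᵥ x + c₁ + z * (b₂ ⬝ᵥ x) + c₂ * z ^ 2 + c₃ * z := by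
  rw [deg2Poly, sum_sum_mul_mul_eq_dotProduct_mulVec]
  rfl

theorem deg2Poly_graph_coeffs_eq_zero {n : ℕ} {A B : Matrix (Fin n) (Fin n) ℝ}
    {b₁ b₂ : Fin n → ℝ} {c₁ c₂ c₃ : ℝ}
    (h : ∀ x, deg2Poly B b₁ b₂ c₁ c₂ c₃ x (x ⬝ᵥ (A *ᵥ x)) = 0) (x : Fin n → ℝ) :
    c₁ = 0 ∧ b₁ ⬝ᵥ x = 0 ∧ x ⬝ᵥ (B *ᵥ x) + c₃ * x ⬝ᵥ (A *ᵥ x) = 0 ∧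
      x ⬝ᵥ (A *ᵥ x) * (b₂ ⬝ᵥ x) = 0 ∧ c₂ * (x ⬝ᵥ (A *ᵥ x)) ^ 2 = 0 :=
  coeffs_eq_zero_of_forall_quartic_eq_zero fun t => by
    have := h (t • x)
    rw [deg2Poly_eq, dotProduct_mulVec_smul, dotProduct_mulVec_smul, dotProduct_smul,
      dotProduct_smul, smul_eq_mul, smul_eq_mul] at this
    linear_combination this

theorem stmt_14_general {n : ℕ} (Astar : Matrix (Fin n) (Fin n) ℝ)
    (hsymm : Astar.IsSymm) (hne : Astar ≠ 0)
    (q : (Fin n → ℝ) → ℝ → ℝ)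
    (hq : ∃ (B : Matrix (Fin n) (Fin n) ℝ) (b₁ b₂ : Fin n → ℝ) (c₁ c₂ c₃ : ℝ),
      ∀ (x : Fin n → ℝ) (z : ℝ), q x z = deg2Poly B b₁ b₂ c₁ c₂ c₃ x z)
    (hvanish : ∀ x : Fin n → ℝ, q x (∑ i, ∑ j, Astar i j * x i * x j) = 0) :
    ∃ C : ℝ, ∀ (x : Fin n → ℝ) (z : ℝ),
      q x z = C * (z - ∑ i, ∑ j, Astar i j * x i * x j) := by
  obtain ⟨B, b₁, b₂, c₁, c₂, c₃, hq⟩ := hq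
  obtain rfl : q = deg2Poly B b₁ b₂ c₁ c₂ c₃ := funext₂ hq
  simp only [sum_sum_mul_mul_eq_dotProduct_mulVec] at hvanish ⊢
  have hcoeffs := deg2Poly_graph_coeffs_eq_zero hvanish
  obtain ⟨x₀, hx₀⟩ := exists_dotProduct_mulVec_ne_zero hsymm hne
  have hc₂ : c₂ = 0 :=
    (mul_eq_zero.mp (hcoeffs x₀).2.2.2.2).resolve_right (pow_ne_zero 2 hx₀)
  have hb₂ := dotProduct_eq_zero_of_forall_dotProduct_mulVec_mul_eq_zero
    (fun y => (hcoeffs y).2.2.2.1) hx₀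
  refine ⟨c₃, fun x z => ?_⟩
  obtain ⟨hc₁, hb₁, hB, -, -⟩ := hcoeffs x
  rw [deg2Poly_eq]
  linear_combination hB + hb₁ + hc₁ + z * hb₂ x + z ^ 2 * hc₂

/-- Let `A*` be a nonzero symmetric matrix with zero diagonal. If
`q : ℝⁿ × ℝ → ℝ` is a polynomial of total degree at most 2 in `(x, z)` (i.e. it has
the general form `xᵀBx + b₁·x + c₁ + z·(b₂·x) + c₂z² + c₃z`) and
`q(x, xᵀA*x) = 0` for every `x ∈ ℝⁿ`, then there is a constant `C` with
`q(x,z) = C·(z − xᵀA*x)` for all `(x, z)`. -/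
theorem stmt_14 {n : ℕ} (hn : 1 ≤ n) (Astar : Matrix (Fin n) (Fin n) ℝ)
    (hsymm : Astar.IsSymm) (hdiag : ∀ i, Astar i i = 0) (hne : Astar ≠ 0)
    (q : (Fin n → ℝ) → ℝ → ℝ)
    (hq : ∃ (B : Matrix (Fin n) (Fin n) ℝ) (b₁ b₂ : Fin n → ℝ) (c₁ c₂ c₃ : ℝ),
      ∀ (x : Fin n → ℝ) (z : ℝ), q x z = deg2Poly B b₁ b₂ c₁ c₂ c₃ x z)
    (hvanish : ∀ x : Fin n → ℝ, q x (∑ i, ∑ j, Astar i j * x i * x j) = 0) :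
    ∃ C : ℝ, ∀ (x : Fin n → ℝ) (z : ℝ),
      q x z = C * (z - ∑ i, ∑ j, Astar i j * x i * x j) :=
  stmt_14_general Astar hsymm hne q hq hvanish
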